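/- Every explanation tree yields an offline justification: Let Π be a ground normal program, X an answer set, p ∈ X, and T' = ⟨V', E'⟩ an explanation tree in the and-or explanation tree for p w.r.t. Π and X such that the labeling l is injective on V'. Then the labeled directed graph G = (V, E) with V = {l(v)⁺ | v an atom vertex of V'} ∪ {⊤} and E containing, for each atom vertex v with (unique) rule-vertex child v': the edge (l(v)⁺, ⊤, +) if B⁺(l(v')) = ∅ (i.e., l(v') is a fact of Π^X), and edges (l(v)⁺, l(v'')⁺, +) for each child v'' of v' otherwise, is an offline justification of p⁺ in Π^X with respect to X and ∅; in particular G has no positive cycle and the support of each node l(v)⁺ in G is a local consistent explanation of l(v)⁺ with respect to (X, ∅). -/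

import Mathlib

/-- A ground normal rule: head atom, positive body atoms, negative body atoms. -/
structure Rule (α : Type) where
  head : α
  pos : Finset α
  neg : Finset α

/-- `Y` is a model of the reduct `Π^X`. -/
def IsModelOfReduct {α : Type} (P : Set (Rule α)) (X Y : Set α) : Prop :=
  ∀ r ∈ P, (∀ a ∈ r.neg, a ∉ X) → ↑r.pos ⊆ Y → r.head ∈ Y

/-- `X` is an answer set of `Π`: a subset-minimal model of the reduct `Π^X`. -/
def IsAnswerSet {α : Type} (P : Set (Rule α)) (X : Set α) : Prop :=
  IsModelOfReduct P X X ∧ ∀ Y ⊆ X, IsModelOfReduct P X Y → Y = X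

/-- Finite rose trees with vertex labels in `L`; a vertex of a tree is identified
with the subtree hanging from it. -/
inductive RTree (L : Type) : Type
  | node : L → List (RTree L) → RTree L

namespace RTree

def label {L : Type} : RTree L → L
  | node l _ => l

def children {L : Type} : RTree L → List (RTree L)
  | node _ cs => cs

/-- The list of all vertices (subtree occurrences) of a tree. -/
def occs {L : Type} : RTree L → List (RTree L)
  | node l cs => node l cs :: (cs.attach.map (fun c => occs c.1)).flatten
decreasing_by
  have := List.sizeOf_lt_of_mem c.2
  simp only [RTree.node.sizeOf_spec]; omega

end RTree

/-- Rule `r` supports atom `p` using atoms in `X` but not in `Z`: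
`H(r) = p`, `B⁺(r) ⊆ X \ Z` and `B⁻(r) ∩ X = ∅`. -/
def Supports {α : Type} (X Z : Set α) (r : Rule α) (p : α) : Prop :=
  r.head = p ∧ ↑r.pos ⊆ X \ Z ∧ ∀ a ∈ r.neg, a ∉ X

/-- `IsAOTNode P X Z t`: `t` is (a node of) the and-or explanation tree w.r.t.
program `P` and answer set `X`, where `Z` is the set of atoms labeling the
ancestor atom vertices.  An atom vertex labeled `p` has one rule-vertex child for
each rule of `P` supporting `p` using atoms in `X` but not in `insert p Z` (and
only such children), and has at least one child (so that every leaf is a rule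
vertex); a rule vertex labeled `r` has one atom-vertex child for each atom of
`B⁺(r)` (and only such children). -/
inductive IsAOTNode {α : Type} (P : Set (Rule α)) (X : Set α) :
    Set α → RTree (α ⊕ Rule α) → Prop
  | atom {Z : Set α} {p : α} {cs : List (RTree (α ⊕ Rule α))}
      (hp : p ∈ X) (hne : cs ≠ [])
      (hcomplete : ∀ r ∈ P, Supports X (insert p Z) r p →
        ∃ c ∈ cs, RTree.label c = Sum.inr r)
      (hsound : ∀ c ∈ cs,
        ∃ r ∈ P, Supports X (insert p Z) r p ∧ RTree.label c = Sum.inr r)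
      (hrec : ∀ c ∈ cs, IsAOTNode P X (insert p Z) c) :
      IsAOTNode P X Z (.node (.inl p) cs)
  | rule {Z : Set α} {r : Rule α} {cs : List (RTree (α ⊕ Rule α))}
      (hcomplete : ∀ a ∈ r.pos, ∃ c ∈ cs, RTree.label c = Sum.inl a)
      (hsound : ∀ c ∈ cs, ∃ a ∈ r.pos, RTree.label c = Sum.inl a)
      (hrec : ∀ c ∈ cs, IsAOTNode P X Z c) :
      IsAOTNode P X Z (.node (.inr r) cs)

/-- `SolOf S T`: `S` is an explanation tree (solution subtree) in the and-or tree
`T`: it has the same root label, each atom (or-) vertex of `S` keeps exactly one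
of the children it has in `T`, and each rule (and-) vertex keeps all of its
children. -/
inductive SolOf {α ρ : Type} : RTree (α ⊕ ρ) → RTree (α ⊕ ρ) → Prop
  | atom {a : α} {cs : List (RTree (α ⊕ ρ))} {c s : RTree (α ⊕ ρ)} :
      c ∈ cs → SolOf s c → SolOf (.node (.inl a) [s]) (.node (.inl a) cs)
  | rule {r : ρ} {cs ss : List (RTree (α ⊕ ρ))} :
      List.Forall₂ SolOf ss cs → SolOf (.node (.inr r) ss) (.node (.inr r) cs)

/-- The Gelfond–Lifschitz reduct `Π^X`. -/
def reduct {α : Type} (P : Set (Rule α)) (X : Set α) : Set (Rule α) :=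
  {r' | ∃ r ∈ P, (∀ a ∈ r.neg, a ∉ X) ∧ r' = ⟨r.head, r.pos, ∅⟩}

/-- Nodes of justification e-graphs: annotated atoms `a⁺`/`a⁻` and the special
sink nodes `assume`, `⊤`, `⊥`. -/
inductive JNode (α : Type) where
  | pos : α → JNode α
  | neg : α → JNode α
  | assume : JNode α
  | top : JNode α
  | bot : JNode α

/-- Labeled edges of an e-graph: (source, target, sign), `true` = `+`, `false` = `−`. -/
abbrev JEdges (α : Type) := Set (JNode α × JNode α × Bool)

/-- The true atoms in the support of a node: targets of positive edges to
positively annotated atoms. -/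
def posSupport {α : Type} (E : JEdges α) (n : JNode α) : Set α :=
  {a | (n, JNode.pos a, true) ∈ E}

/-- The negated atoms in the support of a node: targets of negative edges to
negatively annotated atoms. -/
def negSupport {α : Type} (E : JEdges α) (n : JNode α) : Set α :=
  {a | (n, JNode.neg a, false) ∈ E}

/-- The false atoms in the support of a negative node: targets of positive edges
to negatively annotated atoms. -/
def falseAtomSupport {α : Type} (E : JEdges α) (n : JNode α) : Set α :=
  {a | (n, JNode.neg a, true) ∈ E}

/-- The true atoms occurring negated in the support of a negative node: targets
of negative edges to positively annotated atoms. -/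
def trueNegSupport {α : Type} (E : JEdges α) (n : JNode α) : Set α :=
  {a | (n, JNode.pos a, false) ∈ E}

/-- `(Sa, Sn)` blocks every rule of `P` with head `b`: each such rule has a
positive body atom in `Sa` (assumed false) or a negative body atom in `Sn`
(assumed true). -/
def Blocks {α : Type} (P : Set (Rule α)) (b : α) (Sa Sn : Set α) : Prop :=
  ∀ r ∈ P, r.head = b → ((↑r.pos ∩ Sa).Nonempty ∨ (↑r.neg ∩ Sn).Nonempty)

/-- The support of `b⁺` in the graph with edges `E` is a local consistent
explanation (LCE) of `b⁺` w.r.t. `(X, U)`: either `{assume}`, or the body of a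
rule `r ∈ P` with `H(r) = b`, `B⁺(r) ⊆ X` and `B⁻(r) ⊆ Xᶜ ∪ U` (denoted `{⊤}`
when the body is empty). -/
def LCEpos {α : Type} (P : Set (Rule α)) (X U : Set α) (E : JEdges α) (b : α) : Prop :=
  (JNode.pos b, JNode.assume, true) ∈ E ∨
  ∃ r ∈ P, r.head = b ∧ ↑r.pos ⊆ X ∧ ↑r.neg ⊆ Xᶜ ∪ U ∧
    ((r.pos = ∅ ∧ r.neg = ∅ ∧ (JNode.pos b, JNode.top, true) ∈ E) ∨
     (¬(r.pos = ∅ ∧ r.neg = ∅) ∧ posSupport E (JNode.pos b) = ↑r.pos ∧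
       negSupport E (JNode.pos b) = ↑r.neg))

/-- The support of `b⁻` is an LCE of `b⁻` w.r.t. `(X, U)`: either `{assume}`, or
a minimal set of literals, false w.r.t. `(X, U)`, blocking every rule with head
`b` (denoted `{⊥}` when empty). -/
def LCEneg {α : Type} (P : Set (Rule α)) (X U : Set α) (E : JEdges α) (b : α) : Prop :=
  (JNode.neg b, JNode.assume, false) ∈ E ∨
  (falseAtomSupport E (JNode.neg b) ⊆ Xᶜ ∪ U ∧
   trueNegSupport E (JNode.neg b) ⊆ X ∧
   Blocks P b (falseAtomSupport E (JNode.neg b)) (trueNegSupport E (JNode.neg b)) ∧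
   (∀ Sa' ⊆ falseAtomSupport E (JNode.neg b), ∀ Sn' ⊆ trueNegSupport E (JNode.neg b),
      Blocks P b Sa' Sn' →
      Sa' = falseAtomSupport E (JNode.neg b) ∧ Sn' = trueNegSupport E (JNode.neg b)) ∧
   ((falseAtomSupport E (JNode.neg b) = ∅ ∧ trueNegSupport E (JNode.neg b) = ∅) →
      (JNode.neg b, JNode.bot, true) ∈ E))

/-- `(V, E)` is an offline justification of the annotated atom `b0` w.r.t. the
answer set `X` and the assumption set `U`, for the program `P`: a labeled
directed e-graph in which the only sinks are `assume`, `⊤`, `⊥` (which have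
unique incoming edge signs from each node and no out-going edges), every node is
reachable from `b0`, the support of every annotated atom is an LCE w.r.t.
`(X, U)`, no true atom points to `assume`, an atom `a⁻` points to `assume` iff
`a ∈ U`, and there is no positive cycle (safety). -/
def IsOfflineJust {α : Type} (P : Set (Rule α)) (X U : Set α) (b0 : JNode α)
    (V : Set (JNode α)) (E : JEdges α) : Prop :=
  b0 ∈ V ∧
  (∀ e ∈ E, e.1 ∈ V ∧ e.2.1 ∈ V) ∧
  (∀ n ∈ V, n ≠ JNode.assume → n ≠ JNode.top → n ≠ JNode.bot → ∃ m s, (n, m, s) ∈ E) ∧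
  (∀ m s, (JNode.assume, m, s) ∉ E) ∧
  (∀ m s, (JNode.top, m, s) ∉ E) ∧
  (∀ m s, (JNode.bot, m, s) ∉ E) ∧
  (∀ a : α, (JNode.pos a, JNode.assume, false) ∉ E ∧ (JNode.pos a, JNode.bot, false) ∉ E) ∧
  (∀ a : α, (JNode.neg a, JNode.assume, true) ∉ E ∧ (JNode.neg a, JNode.top, true) ∉ E) ∧
  (∀ n m s, (m = JNode.assume ∨ m = JNode.top ∨ m = JNode.bot) → (n, m, s) ∈ E →
    ∀ m' s', (n, m', s') ∈ E → m' = m ∧ s' = s) ∧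
  (∀ n ∈ V, Relation.ReflTransGen (fun x y => ∃ s, (x, y, s) ∈ E) b0 n) ∧
  (∀ a : α, JNode.pos a ∈ V → a ∈ X ∧ LCEpos P X U E a) ∧
  (∀ a : α, JNode.neg a ∈ V → (a ∉ X ∨ a ∈ U) ∧ LCEneg P X U E a) ∧
  (∀ a : α, (JNode.pos a, JNode.assume, true) ∉ E) ∧
  (∀ a : α, (JNode.neg a, JNode.assume, false) ∈ E ↔ (JNode.neg a ∈ V ∧ a ∈ U)) ∧
  (∀ n, ¬ Relation.TransGen (fun x y => (x, y, true) ∈ E) n n)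

/-! Since the labelling is injective, each atom has a single occurrence in `T'`, and along an
edge `a⁺ → b⁺` the occurrence of `b` is a grandchild of that of `a`.  So the size of the
occurrence strictly decreases along edges: there is no positive cycle, and following edges from
any node ends in `⊤`; walking down `T'` reaches every other node from `p⁺`.  The support of `a⁺`
is the positive body of the rule chosen below `a`, whose reduct lies in `Π^X` because the rule's
negative body is false in `X`. -/

namespace List

lemma Forall₂.exists_of_mem_left {β γ : Type*} {R : β → γ → Prop} {l₁ : List β}
    {l₂ : List γ} (h : Forall₂ R l₁ l₂) {a : β} (ha : a ∈ l₁) : ∃ b ∈ l₂, R a b := by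
  induction h with
  | nil => cases ha
  | cons hab _ ih =>
    rcases mem_cons.1 ha with rfl | ha
    · exact ⟨_, mem_cons_self, hab⟩
    · obtain ⟨b, hb, h⟩ := ih ha
      exact ⟨b, mem_cons_of_mem _ hb, h⟩

lemma Forall₂.exists_of_mem_right {β γ : Type*} {R : β → γ → Prop} {l₁ : List β}
    {l₂ : List γ} (h : Forall₂ R l₁ l₂) {b : γ} (hb : b ∈ l₂) : ∃ a ∈ l₁, R a b :=
  (Forall₂.flip (R := _root_.flip R) h).exists_of_mem_left hb

end List

namespace Relation

variable {β : Type*} {R : β → β → Prop}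

lemma not_transGen_self_of_lt {γ : Type*} [Preorder γ] (f : β → γ)
    (hf : ∀ x y, R x y → f y < f x) (x : β) : ¬ TransGen R x x := by
  suffices ∀ {y}, TransGen R x y → f y < f x from fun h => lt_irrefl _ (this h)
  intro y h
  induction h with
  | single h => exact hf _ _ h
  | tail _ h ih => exact (hf _ _ h).trans ih

lemma reflTransGen_of_exists_lt {S : Set β} {z : β} (f : β → ℕ)
    (h : ∀ x ∈ S, x ≠ z → ∃ y ∈ S, R x y ∧ f y < f x) : ∀ x ∈ S, ReflTransGen R x z := by
  intro x
  induction hn : f x using Nat.strong_induction_on generalizing x with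
  | _ n ih =>
    intro hx
    by_cases hxz : x = z
    · exact hxz ▸ ReflTransGen.refl
    · obtain ⟨y, hy, hxy, hlt⟩ := h x hx hxz
      exact ReflTransGen.head hxy (ih _ (hn ▸ hlt) y rfl hy)

end Relation

namespace RTree

variable {L : Type}

@[simp]
lemma occs_node (l : L) (cs : List (RTree L)) :
    occs (node l cs) = node l cs :: (cs.map occs).flatten := by
  rw [occs, List.attach_map_val]

lemma mem_occs_node {u : RTree L} {l : L} {cs : List (RTree L)} :
    u ∈ occs (node l cs) ↔ u = node l cs ∨ ∃ c ∈ cs, u ∈ c.occs := by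
  simp

lemma self_mem_occs (t : RTree L) : t ∈ t.occs := by
  cases t
  simp

lemma mem_occs_trans : ∀ {t s u : RTree L}, s ∈ t.occs → u ∈ s.occs → u ∈ t.occs
  | node l cs, s, u, hs, hu => by
    rcases mem_occs_node.1 hs with rfl | ⟨c, hc, hs⟩
    · exact hu
    · exact mem_occs_node.2 (Or.inr ⟨c, hc, mem_occs_trans hs hu⟩)
termination_by t => sizeOf t
decreasing_by
  have := List.sizeOf_lt_of_mem hc
  simp only [node.sizeOf_spec]
  omega

lemma mem_occs_of_mem_children {t : RTree L} {l : L} {cs : List (RTree L)} {c : RTree L}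
    (ht : node l cs ∈ t.occs) (hc : c ∈ cs) : c ∈ t.occs :=
  mem_occs_trans ht (mem_occs_node.2 (Or.inr ⟨c, hc, self_mem_occs c⟩))

lemma sizeOf_lt_of_mem_children [SizeOf L] {l : L} {cs : List (RTree L)} {c : RTree L}
    (hc : c ∈ cs) : sizeOf c < sizeOf (node l cs) := by
  have := List.sizeOf_lt_of_mem hc
  simp only [node.sizeOf_spec]
  omega

end RTree

section ExplanationTree

variable {α : Type} {P : Set (Rule α)} {X : Set α}

lemma SolOf.label_eq {ρ : Type} {s t : RTree (α ⊕ ρ)} (h : SolOf s t) : s.label = t.label := by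
  cases h <;> rfl

lemma SolOf.exists_of_mem_occs :
    ∀ {s t : RTree (α ⊕ Rule α)} {Z : Set α}, IsAOTNode P X Z t → SolOf s t →
      ∀ u ∈ s.occs, ∃ Z' t', IsAOTNode P X Z' t' ∧ SolOf u t'
  | .node l ss, t, Z, ht, hs, u, hu => by
    rcases RTree.mem_occs_node.1 hu with rfl | ⟨c, hc, hcu⟩
    · exact ⟨Z, t, ht, hs⟩
    · cases hs with
      | atom hmem hsol =>
        cases ht with
        | atom _ _ _ _ hrec =>
          rw [List.mem_singleton] at hc
          subst hc
          exact hsol.exists_of_mem_occs (hrec _ hmem) u hcu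
      | rule hss =>
        obtain ⟨c', hc', hsol⟩ := hss.exists_of_mem_left hc
        cases ht with
        | rule _ _ hrec => exact hsol.exists_of_mem_occs (hrec _ hc') u hcu
termination_by s => sizeOf s
decreasing_by
  all_goals
    subst_vars
    exact RTree.sizeOf_lt_of_mem_children hc

/-- The shape of an explanation tree at its atom vertices, as inherited from the and-or tree. -/
structure IsExplTree (P : Set (Rule α)) (X : Set α) (T : RTree (α ⊕ Rule α)) : Prop where
  atom_shape : ∀ t ∈ T.occs, ∀ a, t.label = .inl a →
    ∃ r rcs, t = .node (.inl a) [.node (.inr r) rcs]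
  atom_spec : ∀ a r rcs, .node (.inl a) [.node (.inr r) rcs] ∈ T.occs →
    a ∈ X ∧ (⟨a, r.pos, ∅⟩ : Rule α) ∈ reduct P X ∧ ↑r.pos ⊆ X ∧
      (∀ c ∈ rcs, ∃ b ∈ r.pos, c.label = .inl b) ∧ ∀ b ∈ r.pos, ∃ c ∈ rcs, c.label = .inl b

lemma SolOf.atom_vertex {s t : RTree (α ⊕ Rule α)} {Z : Set α} {a : α}
    (ht : IsAOTNode P X Z t) (hs : SolOf s t) (hl : s.label = .inl a) :
    ∃ r rcs, s = .node (.inl a) [.node (.inr r) rcs] ∧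
      a ∈ X ∧ (⟨a, r.pos, ∅⟩ : Rule α) ∈ reduct P X ∧ ↑r.pos ⊆ X ∧
      (∀ c ∈ rcs, ∃ b ∈ r.pos, c.label = .inl b) ∧ ∀ b ∈ r.pos, ∃ c ∈ rcs, c.label = .inl b := by
  cases hs with
  | rule => cases hl
  | @atom _ _ c _ hc hsol =>
    cases hl
    cases ht with
    | atom ha _ _ hsound hrec =>
      obtain ⟨r, hrP, ⟨hhead, hpos, hneg⟩, hlab⟩ := hsound c hc
      obtain ⟨_, _⟩ := c
      cases hlab
      cases hsol with
      | rule hss =>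
        cases hrec _ hc with
        | rule hcomplete hsound' _ =>
          refine ⟨r, _, rfl, ha, ⟨r, hrP, hneg, by rw [hhead]⟩, fun b hb => (hpos hb).1, ?_, ?_⟩
          · intro c hc
            obtain ⟨c', hc', hsol⟩ := hss.exists_of_mem_left hc
            obtain ⟨b, hb, hl⟩ := hsound' c' hc'
            exact ⟨b, hb, hsol.label_eq.trans hl⟩
          · intro b hb
            obtain ⟨c', hc', hl⟩ := hcomplete b hb
            obtain ⟨c, hc, hsol⟩ := hss.exists_of_mem_right hc'
            exact ⟨c, hc, hsol.label_eq.trans hl⟩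

theorem SolOf.isExplTree {s t : RTree (α ⊕ Rule α)} {Z : Set α} (ht : IsAOTNode P X Z t)
    (hs : SolOf s t) : IsExplTree P X s where
  atom_shape u hu a hl := by
    obtain ⟨Z', t', ht', hu'⟩ := hs.exists_of_mem_occs ht u hu
    obtain ⟨r, rcs, rfl, -⟩ := hu'.atom_vertex ht' hl
    exact ⟨r, rcs, rfl⟩
  atom_spec a r rcs hu := by
    obtain ⟨Z', t', ht', hu'⟩ := hs.exists_of_mem_occs ht _ hu
    obtain ⟨r', rcs', heq, hspec⟩ := hu'.atom_vertex ht' rfl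
    simp only [RTree.node.injEq, Sum.inr.injEq, List.cons.injEq, and_true, true_and] at heq
    obtain ⟨rfl, rfl⟩ := heq
    exact hspec

end ExplanationTree

section Justification

variable {α : Type} {P : Set (Rule α)} {X : Set α} {T : RTree (α ⊕ Rule α)}

/-- `treeNodes T` and `treeEdges T` are the node and edge sets of the graph `G` of the theorem. -/
def treeNodes (T : RTree (α ⊕ Rule α)) : Set (JNode α) :=
  {n | n = JNode.top ∨ ∃ a : α, n = JNode.pos a ∧ ∃ t ∈ RTree.occs T, RTree.label t = Sum.inl a}

def treeEdges (T : RTree (α ⊕ Rule α)) : JEdges α :=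
  {e | ∃ t ∈ RTree.occs T, ∃ a : α, ∃ r : Rule α, ∃ rcs : List (RTree (α ⊕ Rule α)),
    t = RTree.node (Sum.inl a) [RTree.node (Sum.inr r) rcs] ∧
    ((r.pos = ∅ ∧ e = (JNode.pos a, JNode.top, true)) ∨
     (∃ b : α, (∃ c ∈ rcs, RTree.label c = Sum.inl b) ∧ e = (JNode.pos a, JNode.pos b, true)))}

lemma treeEdges_source {e : JNode α × JNode α × Bool} (he : e ∈ treeEdges T) :
    ∃ a y, e = (.pos a, y, true) ∧ (y = .top ∨ ∃ b, y = .pos b) := by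
  obtain ⟨-, -, a, -, -, -, ⟨-, rfl⟩ | ⟨b, -, rfl⟩⟩ := he
  · exact ⟨a, _, rfl, Or.inl rfl⟩
  · exact ⟨a, _, rfl, Or.inr ⟨b, rfl⟩⟩

lemma treeEdges_subset_nodes {e : JNode α × JNode α × Bool} (he : e ∈ treeEdges T) :
    e.1 ∈ treeNodes T ∧ e.2.1 ∈ treeNodes T := by
  obtain ⟨t, ht, a, r, rcs, rfl, ⟨-, rfl⟩ | ⟨b, ⟨c, hc, hcb⟩, rfl⟩⟩ := he
  · exact ⟨Or.inr ⟨a, rfl, _, ht, rfl⟩, Or.inl rfl⟩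
  · refine ⟨Or.inr ⟨a, rfl, _, ht, rfl⟩, Or.inr ⟨b, rfl, c, ?_, hcb⟩⟩
    exact RTree.mem_occs_of_mem_children (RTree.mem_occs_of_mem_children ht
      (List.mem_singleton_self _)) hc

lemma exists_treeEdge (hT : IsExplTree P X T) {n : JNode α} (hn : n ∈ treeNodes T)
    (htop : n ≠ .top) : ∃ m s, (n, m, s) ∈ treeEdges T := by
  obtain rfl | ⟨a, rfl, t, ht, hta⟩ := hn
  · exact absurd rfl htop
  obtain ⟨r, rcs, rfl⟩ := hT.atom_shape t ht a hta
  obtain ⟨-, -, -, -, hcomplete⟩ := hT.atom_spec a r rcs ht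
  rcases r.pos.eq_empty_or_nonempty with hpos | ⟨b, hb⟩
  · exact ⟨_, _, _, ht, a, r, rcs, rfl, Or.inl ⟨hpos, rfl⟩⟩
  · exact ⟨_, _, _, ht, a, r, rcs, rfl, Or.inr ⟨b, hcomplete b hb, rfl⟩⟩

lemma treeEdges_pos_iff (hT : IsExplTree P X T) (hinj : (T.occs.map RTree.label).Nodup)
    {a : α} {r : Rule α} {rcs : List (RTree (α ⊕ Rule α))}
    (ht : .node (.inl a) [.node (.inr r) rcs] ∈ T.occs) {y : JNode α} {s : Bool} :
    (.pos a, y, s) ∈ treeEdges T ↔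
      s = true ∧ ((r.pos = ∅ ∧ y = .top) ∨ ∃ b ∈ r.pos, y = .pos b) := by
  obtain ⟨-, -, -, hsound, hcomplete⟩ := hT.atom_spec a r rcs ht
  constructor
  · rintro ⟨t', ht', a', r', rcs', rfl, hedge⟩
    obtain rfl : a' = a := by
      rcases hedge with ⟨-, he⟩ | ⟨_, -, he⟩ <;> exact (JNode.pos.inj (Prod.ext_iff.1 he).1).symm
    have := List.inj_on_of_nodup_map hinj ht' ht rfl
    simp only [RTree.node.injEq, Sum.inr.injEq, List.cons.injEq, and_true, true_and] at this
    obtain ⟨rfl, rfl⟩ := this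
    rcases hedge with ⟨hpos, he⟩ | ⟨b, ⟨c, hc, hcb⟩, he⟩ <;>
      simp only [Prod.mk.injEq, true_and] at he <;> obtain ⟨rfl, rfl⟩ := he
    · exact ⟨rfl, Or.inl ⟨hpos, rfl⟩⟩
    · obtain ⟨b', hb', hcb'⟩ := hsound c hc
      obtain rfl : b = b' := Sum.inl.inj (hcb.symm.trans hcb')
      exact ⟨rfl, Or.inr ⟨b, hb', rfl⟩⟩
  · rintro ⟨rfl, ⟨hpos, rfl⟩ | ⟨b, hb, rfl⟩⟩
    · exact ⟨_, ht, a, r, rcs, rfl, Or.inl ⟨hpos, rfl⟩⟩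
    · exact ⟨_, ht, a, r, rcs, rfl, Or.inr ⟨b, hcomplete b hb, rfl⟩⟩

lemma treeEdges_sink_unique (hT : IsExplTree P X T) (hinj : (T.occs.map RTree.label).Nodup)
    (n m : JNode α) (s : Bool) (hm : m = .assume ∨ m = .top ∨ m = .bot)
    (he : (n, m, s) ∈ treeEdges T) (m' : JNode α) (s' : Bool) (he' : (n, m', s') ∈ treeEdges T) :
    m' = m ∧ s' = s := by
  obtain ⟨t, ht, a, r, rcs, rfl, hedge⟩ := he
  rcases hedge with ⟨hpos, he⟩ | ⟨b, -, he⟩ <;> simp only [Prod.mk.injEq] at he <;>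
    obtain ⟨rfl, rfl, rfl⟩ := he
  · obtain ⟨rfl, ⟨-, rfl⟩ | ⟨b, hb, -⟩⟩ := (treeEdges_pos_iff hT hinj ht).1 he'
    · exact ⟨rfl, rfl⟩
    · simp [hpos] at hb
  · simp at hm

lemma lcePos_treeEdges (hT : IsExplTree P X T) (hinj : (T.occs.map RTree.label).Nodup) (a : α)
    (ha : .pos a ∈ treeNodes T) : a ∈ X ∧ LCEpos (reduct P X) X ∅ (treeEdges T) a := by
  obtain h | ⟨_, h, t, ht, hta⟩ := ha
  · cases h
  cases h
  obtain ⟨r, rcs, rfl⟩ := hT.atom_shape t ht _ hta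
  obtain ⟨haX, hred, hposX, -, -⟩ := hT.atom_spec _ r rcs ht
  refine ⟨haX, Or.inr ⟨_, hred, rfl, hposX, by simp, ?_⟩⟩
  rcases r.pos.eq_empty_or_nonempty with hpos | hne
  · exact Or.inl ⟨hpos, rfl, (treeEdges_pos_iff hT hinj ht).2 ⟨rfl, Or.inl ⟨hpos, rfl⟩⟩⟩
  refine Or.inr ⟨fun h => hne.ne_empty h.1, ?_, ?_⟩
  · ext b
    simp [posSupport, treeEdges_pos_iff hT hinj ht]
  · ext b
    simp [negSupport, treeEdges_pos_iff hT hinj ht]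

lemma exists_rank_sizeOf_occ (hinj : (T.occs.map RTree.label).Nodup) :
    ∃ rank : JNode α → ℕ, rank .top = 0 ∧
      ∀ t ∈ T.occs, ∀ a, t.label = .inl a → rank (.pos a) = sizeOf t := by
  classical
  refine ⟨fun n => if h : ∃ t ∈ T.occs, ∃ a, n = .pos a ∧ t.label = .inl a
    then sizeOf h.choose else 0, by simp, fun t ht a hta => ?_⟩
  have h : ∃ t ∈ T.occs, ∃ a', JNode.pos a = .pos a' ∧ t.label = .inl a' := ⟨t, ht, a, rfl, hta⟩
  obtain ⟨hmem, a', ha', hl⟩ := h.choose_spec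
  cases ha'
  simp only [dif_pos h]
  rw [List.inj_on_of_nodup_map hinj hmem ht (hl.trans hta.symm)]

lemma treeEdges_rank_lt {rank : JNode α → ℕ} (htop : rank .top = 0)
    (hrank : ∀ t ∈ T.occs, ∀ a, t.label = .inl a → rank (.pos a) = sizeOf t)
    {x y : JNode α} {s : Bool} (he : (x, y, s) ∈ treeEdges T) : rank y < rank x := by
  obtain ⟨t, ht, a, r, rcs, rfl, hedge⟩ := he
  have hchild := RTree.mem_occs_of_mem_children ht (List.mem_singleton_self _)
  rcases hedge with ⟨-, he⟩ | ⟨b, ⟨c, hc, hcb⟩, he⟩ <;> simp only [Prod.mk.injEq] at he <;>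
    obtain ⟨rfl, rfl, rfl⟩ := he <;> rw [hrank _ ht a rfl]
  · rw [htop, RTree.node.sizeOf_spec]
    omega
  · rw [hrank c (RTree.mem_occs_of_mem_children hchild hc) b hcb]
    exact (RTree.sizeOf_lt_of_mem_children hc).trans
      (RTree.sizeOf_lt_of_mem_children (List.mem_singleton_self _))

lemma treeEdges_acyclic (hinj : (T.occs.map RTree.label).Nodup) (n : JNode α) :
    ¬ Relation.TransGen (fun x y => (x, y, true) ∈ treeEdges T) n n := by
  obtain ⟨rank, htop, hrank⟩ := exists_rank_sizeOf_occ hinj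
  exact Relation.not_transGen_self_of_lt rank (fun _ _ => treeEdges_rank_lt htop hrank) n

lemma reflTransGen_treeEdges_top (hT : IsExplTree P X T) (hinj : (T.occs.map RTree.label).Nodup)
    {n : JNode α} (hn : n ∈ treeNodes T) :
    Relation.ReflTransGen (fun x y => ∃ s, (x, y, s) ∈ treeEdges T) n .top := by
  obtain ⟨rank, htop, hrank⟩ := exists_rank_sizeOf_occ hinj
  refine Relation.reflTransGen_of_exists_lt rank (fun x hx hxtop => ?_) n hn
  obtain ⟨y, s, he⟩ := exists_treeEdge hT hx hxtop
  exact ⟨y, (treeEdges_subset_nodes he).2, ⟨s, he⟩, treeEdges_rank_lt htop hrank he⟩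

lemma reflTransGen_treeEdges_of_mem_occs (hT : IsExplTree P X T) :
    ∀ {s : RTree (α ⊕ Rule α)} {a b : α}, s ∈ T.occs → s.label = .inl a →
      ∀ u ∈ s.occs, u.label = .inl b →
        Relation.ReflTransGen (fun x y => ∃ s, (x, y, s) ∈ treeEdges T) (.pos a) (.pos b)
  | s, a, b, hs, hsa, u, hu, hub => by
    obtain ⟨r, rcs, hsr⟩ := hT.atom_shape s hs a hsa
    rw [hsr] at hs hu
    obtain ⟨-, -, -, hsound, -⟩ := hT.atom_spec a r rcs hs
    rcases RTree.mem_occs_node.1 hu with rfl | ⟨_, hrule, hu⟩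
    · cases hub
      exact Relation.ReflTransGen.refl
    rw [List.mem_singleton] at hrule
    subst hrule
    rcases RTree.mem_occs_node.1 hu with rfl | ⟨c, hc, hu⟩
    · cases hub
    obtain ⟨b', hb', hcb'⟩ := hsound c hc
    have hcT := RTree.mem_occs_of_mem_children
      (RTree.mem_occs_of_mem_children hs (List.mem_singleton_self _)) hc
    exact Relation.ReflTransGen.head ⟨true, _, hs, a, r, rcs, rfl, Or.inr ⟨b', ⟨c, hc, hcb'⟩, rfl⟩⟩
      (reflTransGen_treeEdges_of_mem_occs hT hcT hcb' u hu hub)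
termination_by s => sizeOf s
decreasing_by
  rw [hsr]
  exact (RTree.sizeOf_lt_of_mem_children hc).trans
    (RTree.sizeOf_lt_of_mem_children (List.mem_singleton_self _))

lemma reflTransGen_treeEdges_root (hT : IsExplTree P X T)
    (hinj : (T.occs.map RTree.label).Nodup) {p : α} (hroot : T.label = .inl p) {n : JNode α}
    (hn : n ∈ treeNodes T) :
    Relation.ReflTransGen (fun x y => ∃ s, (x, y, s) ∈ treeEdges T) (.pos p) n := by
  obtain rfl | ⟨a, rfl, t, ht, hta⟩ := hn
  · exact reflTransGen_treeEdges_top hT hinj (Or.inr ⟨p, rfl, T, T.self_mem_occs, hroot⟩)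
  · exact reflTransGen_treeEdges_of_mem_occs hT T.self_mem_occs hroot t ht hta

end Justification

theorem explanationTree_to_offlineJustification_general {α : Type} (P : Set (Rule α))
    (X : Set α) (p : α)
    (T T' : RTree (α ⊕ Rule α)) (hT : IsAOTNode P X ∅ T)
    (hroot : RTree.label T = Sum.inl p) (hT' : SolOf T' T)
    (hinj : ((RTree.occs T').map RTree.label).Nodup) :
    IsOfflineJust (reduct P X) X ∅ (JNode.pos p)
      ({n | n = JNode.top ∨
        ∃ a : α, n = JNode.pos a ∧ ∃ t ∈ RTree.occs T', RTree.label t = Sum.inl a})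
      ({e | ∃ t ∈ RTree.occs T', ∃ a : α, ∃ r : Rule α,
        ∃ rcs : List (RTree (α ⊕ Rule α)),
          t = RTree.node (Sum.inl a) [RTree.node (Sum.inr r) rcs] ∧
          ((r.pos = ∅ ∧ e = (JNode.pos a, JNode.top, true)) ∨
           (∃ b : α, (∃ c ∈ rcs, RTree.label c = Sum.inl b) ∧
             e = (JNode.pos a, JNode.pos b, true)))}) := by
  have hE : IsExplTree P X T' := hT'.isExplTree hT
  have hroot' : T'.label = .inl p := hT'.label_eq.trans hroot
  refine ⟨Or.inr ⟨p, rfl, T', T'.self_mem_occs, hroot'⟩, fun e he => treeEdges_subset_nodes he,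
    fun n hn _ htop _ => exists_treeEdge hE hn htop, ?_, ?_, ?_, ?_, ?_,
    treeEdges_sink_unique hE hinj, fun n hn => reflTransGen_treeEdges_root hE hinj hroot' hn,
    lcePos_treeEdges hE hinj, ?_, ?_, ?_, treeEdges_acyclic hinj⟩
  · intro m s h; obtain ⟨_, _, ⟨⟩, -⟩ := treeEdges_source h
  · intro m s h; obtain ⟨_, _, ⟨⟩, -⟩ := treeEdges_source h
  · intro m s h; obtain ⟨_, _, ⟨⟩, -⟩ := treeEdges_source h
  · refine fun a => ⟨fun h => ?_, fun h => ?_⟩ <;> obtain ⟨_, _, ⟨⟩, -⟩ := treeEdges_source h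
  · refine fun a => ⟨fun h => ?_, fun h => ?_⟩ <;> obtain ⟨_, _, ⟨⟩, -⟩ := treeEdges_source h
  · rintro a (h | ⟨_, h, -⟩) <;> cases h
  · intro a h
    obtain ⟨_, _, ⟨⟩, h | ⟨_, h⟩⟩ := treeEdges_source h <;> cases h
  · refine fun a => ⟨fun h => ?_, fun ⟨_, h⟩ => h.elim⟩
    obtain ⟨_, _, ⟨⟩, -⟩ := treeEdges_source h

/-- Every explanation tree yields an offline justification: if `T'` is an
explanation tree (with injective labeling) in the and-or explanation tree for
`p` w.r.t. `Π` and answer set `X`, then the graph whose nodes are `⊤` together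
with `l(v)⁺` for the atom vertices `v` of `T'`, and whose edges connect each
`l(v)⁺` either to `⊤` (when the rule labeling the unique rule-vertex child of
`v` is a fact of `Π^X`, i.e. has empty positive body) or positively to
`l(v'')⁺` for each child `v''` of that rule vertex, is an offline justification
of `p⁺` in `Π^X` with respect to `X` and `∅`; in particular it has no positive
cycle and the support of each of its nodes is an LCE w.r.t. `(X, ∅)`. -/
theorem explanationTree_to_offlineJustification {α : Type} (P : Set (Rule α))
    (X : Set α) (hX : IsAnswerSet P X) (p : α) (hp : p ∈ X)
    (T T' : RTree (α ⊕ Rule α)) (hT : IsAOTNode P X ∅ T)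
    (hroot : RTree.label T = Sum.inl p) (hT' : SolOf T' T)
    (hinj : ((RTree.occs T').map RTree.label).Nodup) :
    IsOfflineJust (reduct P X) X ∅ (JNode.pos p)
      ({n | n = JNode.top ∨
        ∃ a : α, n = JNode.pos a ∧ ∃ t ∈ RTree.occs T', RTree.label t = Sum.inl a})
      ({e | ∃ t ∈ RTree.occs T', ∃ a : α, ∃ r : Rule α,
        ∃ rcs : List (RTree (α ⊕ Rule α)),
          t = RTree.node (Sum.inl a) [RTree.node (Sum.inr r) rcs] ∧
          ((r.pos = ∅ ∧ e = (JNode.pos a, JNode.top, true)) ∨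
           (∃ b : α, (∃ c ∈ rcs, RTree.label c = Sum.inl b) ∧
             e = (JNode.pos a, JNode.pos b, true)))}) :=
  explanationTree_to_offlineJustification_general P X p T T' hT hroot hT' hinj
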